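/- Let n ≥ 3, let W be a 2-basic landmark system for HG(n,n,n;3), and let u = (n+1,n+1,n+1). Then W ∪ {u} is a resolving set for HG(n+1,n+1,n+1;3) if and only if W contains none of: (F1) a forbidden 4-cycle, i.e., a permutation (i,j,k) of (1,2,3), values a ≠ b in [n], c,d ∈ [n], and four distinct landmarks w₁,w₂,w₃,w₄ with W_{i,a} = {w₁,w₂}, W_{i,b} = {w₃,w₄}, W_{j,c} = {w₂,w₃}, W_{k,d} = {w₁,w₄}; (F2) a forbidden 6-cycle, i.e., six distinct landmarks w₁,…,w₆ with (w₁)₁ = (w₂)₁, (w₄)₁ = (w₅)₁, (w₂)₂ = (w₃)₂, (w₅)₂ = (w₆)₂, (w₃)₃ = (w₄)₃, (w₆)₃ = (w₁)₃, and (w₁)₁ ≠ (w₄)₁, (w₂)₂ ≠ (w₅)₂, (w₃)₃ ≠ (w₆)₃; (F3) a rainbow triangle, i.e., three distinct landmarks w₁,w₂,w₃ with (w₁)₁ = (w₂)₁, (w₂)₂ = (w₃)₂, (w₃)₃ = (w₁)₃. -/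

import Mathlib

/-- The diagonal generalized Hamming graph `HG(n,n,n;3)`: adjacent iff the vertices
differ in all three coordinates. -/
def HG3 (n : ℕ) : SimpleGraph (Fin n × Fin n × Fin n) where
  Adj x y := x.1 ≠ y.1 ∧ x.2.1 ≠ y.2.1 ∧ x.2.2 ≠ y.2.2
  symm := ⟨fun x y h => ⟨h.1.symm, h.2.1.symm, h.2.2.symm⟩⟩
  loopless := ⟨fun x h => h.1 rfl⟩

/-- The `i`-th coordinate of a vertex, `i : Fin 3`. -/
def coord {n : ℕ} (i : Fin 3) (w : Fin n × Fin n × Fin n) : Fin n :=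
  if i = 0 then w.1 else if i = 1 then w.2.1 else w.2.2

/-- The block `W_{i,a}` of landmarks in `W` whose `i`-th coordinate equals `a`. -/
def block {n : ℕ} (W : Set (Fin n × Fin n × Fin n)) (i : Fin 3) (a : Fin n) :
    Set (Fin n × Fin n × Fin n) := {w ∈ W | coord i w = a}

/-- `W` is a resolving set for `HG(n,n,n;3)`. -/
def IsResolving {n : ℕ} (W : Set (Fin n × Fin n × Fin n)) : Prop :=
  ∀ x y : Fin n × Fin n × Fin n, x ∉ W → y ∉ W → x ≠ y →
    ∃ w ∈ W, (HG3 n).dist x w ≠ (HG3 n).dist y w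

/-- `W` is a 2-basic landmark system: every block has exactly two elements, and
blocks of different colors meet in at most one element. -/
def TwoBasic {n : ℕ} (W : Set (Fin n × Fin n × Fin n)) : Prop :=
  (∀ (i : Fin 3) (a : Fin n), (block W i a).ncard = 2) ∧
  (∀ i j : Fin 3, i < j → ∀ a b : Fin n, (block W i a ∩ block W j b).ncard ≤ 1)

/-- (F1) A forbidden 4-cycle: for some permutation `(i,j,k)` of the colors, two
disjoint blocks of color `i` together with a block of color `j` and one of color `k`
form a 4-cycle on four distinct landmarks. -/
def HasF1 {n : ℕ} (W : Set (Fin n × Fin n × Fin n)) : Prop :=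
  ∃ (σ : Equiv.Perm (Fin 3)) (a b c d : Fin n) (w₁ w₂ w₃ w₄ : Fin n × Fin n × Fin n),
    a ≠ b ∧ List.Pairwise (· ≠ ·) [w₁, w₂, w₃, w₄] ∧
    block W (σ 0) a = {w₁, w₂} ∧ block W (σ 0) b = {w₃, w₄} ∧
    block W (σ 1) c = {w₂, w₃} ∧ block W (σ 2) d = {w₁, w₄}

/-- (F2) A forbidden 6-cycle: six distinct landmarks whose consecutive coordinate
agreements follow the color pattern 1,2,3,1,2,3 with opposite edges of equal color. -/
def HasF2 {n : ℕ} (W : Set (Fin n × Fin n × Fin n)) : Prop :=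
  ∃ w₁ w₂ w₃ w₄ w₅ w₆ : Fin n × Fin n × Fin n,
    List.Pairwise (· ≠ ·) [w₁, w₂, w₃, w₄, w₅, w₆] ∧
    w₁ ∈ W ∧ w₂ ∈ W ∧ w₃ ∈ W ∧ w₄ ∈ W ∧ w₅ ∈ W ∧ w₆ ∈ W ∧
    w₁.1 = w₂.1 ∧ w₄.1 = w₅.1 ∧
    w₂.2.1 = w₃.2.1 ∧ w₅.2.1 = w₆.2.1 ∧
    w₃.2.2 = w₄.2.2 ∧ w₆.2.2 = w₁.2.2 ∧
    w₁.1 ≠ w₄.1 ∧ w₂.2.1 ≠ w₅.2.1 ∧ w₃.2.2 ≠ w₆.2.2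

/-- (F3) A rainbow triangle: three distinct landmarks pairwise sharing a coordinate,
one agreement in each coordinate. -/
def HasF3 {n : ℕ} (W : Set (Fin n × Fin n × Fin n)) : Prop :=
  ∃ w₁ w₂ w₃ : Fin n × Fin n × Fin n,
    List.Pairwise (· ≠ ·) [w₁, w₂, w₃] ∧
    w₁ ∈ W ∧ w₂ ∈ W ∧ w₃ ∈ W ∧
    w₁.1 = w₂.1 ∧ w₂.2.1 = w₃.2.1 ∧ w₃.2.2 = w₁.2.2

/-!
In `HG(m,m,m;3)` with `m ≥ 3` two distinct vertices are at distance `1` or `2` according as they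
differ in every coordinate or not, so a landmark separates two vertices exactly when it shares a
coordinate with one of them but not with the other. For the landmarks `W ∪ {u}` a vertex `x` is
therefore seen through its trace (the landmarks of `W` agreeing with `x` in some coordinate) and
through whether `x` has a coordinate `n + 1`.

If twins `x`, `y` differ in coordinate `i`, the block of `x` of colour `i` lies in the union of
the two other blocks of `y`, and being a pair it meets each of them in exactly one landmark.
Chasing these landmarks gives a rainbow triangle when `x` and `y` have a coordinate `n + 1`, and
otherwise a forbidden 4-cycle, a contradiction or a forbidden 6-cycle according as they differ
in one, two or three coordinates. Conversely, every forbidden configuration produces twins.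
-/

lemma Set.eq_pair_of_ncard_eq_two {α : Type*} [Finite α] {s : Set α} {a b : α}
    (hs : s.ncard = 2) (hab : a ≠ b) (ha : a ∈ s) (hb : b ∈ s) : s = {a, b} :=
  (Set.eq_of_subset_of_ncard_le (Set.insert_subset ha (Set.singleton_subset_iff.2 hb))
    (by rw [hs, Set.ncard_pair hab])).symm

lemma Fin.exists_ne_ne_of_three_le {m : ℕ} (hm : 3 ≤ m) (a b : Fin m) :
    ∃ c : Fin m, c ≠ a ∧ c ≠ b := by
  by_contra! h
  have : (Finset.univ : Finset (Fin m)) ⊆ {a, b} := fun c _ => by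
    rcases eq_or_ne c a with rfl | hca
    · simp
    · simp [h c hca]
  have := (Finset.card_le_card this).trans (Finset.card_le_two (a := a) (b := b))
  simp only [Finset.card_univ, Fintype.card_fin] at this
  omega

lemma Fin.eq_or_eq_or_eq_of_ne {i j k : Fin 3} (hij : i ≠ j) (hik : i ≠ k) (hjk : j ≠ k)
    (l : Fin 3) : l = i ∨ l = j ∨ l = k := by
  omega

lemma Equiv.Perm.fin_three_apply_ne (σ : Equiv.Perm (Fin 3)) :
    σ 0 ≠ σ 1 ∧ σ 0 ≠ σ 2 ∧ σ 1 ≠ σ 2 :=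
  ⟨σ.injective.ne (by decide), σ.injective.ne (by decide), σ.injective.ne (by decide)⟩

section Coordinates

variable {n : ℕ}

@[simp] lemma coord_zero (w : Fin n × Fin n × Fin n) : coord 0 w = w.1 := rfl
@[simp] lemma coord_one (w : Fin n × Fin n × Fin n) : coord 1 w = w.2.1 := rfl
@[simp] lemma coord_two (w : Fin n × Fin n × Fin n) : coord 2 w = w.2.2 := rfl

lemma forall_coord_iff {P : Fin n → Fin n → Prop} {x y : Fin n × Fin n × Fin n} :
    (∀ i, P (coord i x) (coord i y)) ↔ P x.1 y.1 ∧ P x.2.1 y.2.1 ∧ P x.2.2 y.2.2 := by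
  refine ⟨fun h => ⟨h 0, h 1, h 2⟩, fun h i => ?_⟩
  fin_cases i <;> simp [h]

lemma ext_coord {x y : Fin n × Fin n × Fin n} : x = y ↔ ∀ i, coord i x = coord i y := by
  rw [forall_coord_iff]; aesop

lemma exists_coord_eq (f : Fin 3 → Fin n) : ∃ v : Fin n × Fin n × Fin n, ∀ i, coord i v = f i :=
  ⟨(f 0, f 1, f 2), fun i => by fin_cases i <;> rfl⟩

end Coordinates

namespace HG3

variable {m : ℕ}

lemma adj_iff {x y : Fin m × Fin m × Fin m} : (HG3 m).Adj x y ↔ ∀ i, coord i x ≠ coord i y := by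
  rw [forall_coord_iff]; rfl

lemma dist_eq_two_of_not_adj (hm : 3 ≤ m) {x y : Fin m × Fin m × Fin m} (hxy : x ≠ y)
    (h : ¬(HG3 m).Adj x y) : (HG3 m).dist x y = 2 := by
  obtain ⟨c₁, hx₁, hy₁⟩ := Fin.exists_ne_ne_of_three_le hm x.1 y.1
  obtain ⟨c₂, hx₂, hy₂⟩ := Fin.exists_ne_ne_of_three_le hm x.2.1 y.2.1
  obtain ⟨c₃, hx₃, hy₃⟩ := Fin.exists_ne_ne_of_three_le hm x.2.2 y.2.2
  have hxz : (HG3 m).Adj x (c₁, c₂, c₃) := ⟨hx₁.symm, hx₂.symm, hx₃.symm⟩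
  have hzy : (HG3 m).Adj (c₁, c₂, c₃) y := ⟨hy₁, hy₂, hy₃⟩
  have hle := SimpleGraph.dist_le (hxz.toWalk.append hzy.toWalk)
  have hpos := (hxz.reachable.trans hzy.reachable).pos_dist_of_ne hxy
  have hne : (HG3 m).dist x y ≠ 1 := fun h1 => h (SimpleGraph.dist_eq_one_iff_adj.1 h1)
  simp only [SimpleGraph.Walk.length_append, SimpleGraph.Walk.length_cons,
    SimpleGraph.Walk.length_nil] at hle
  omega

lemma dist_eq_dist_iff (hm : 3 ≤ m) {x y w : Fin m × Fin m × Fin m} (hxw : x ≠ w)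
    (hyw : y ≠ w) :
    (HG3 m).dist x w = (HG3 m).dist y w ↔ ((HG3 m).Adj x w ↔ (HG3 m).Adj y w) := by
  have hdist : ∀ {z}, z ≠ w →
      (HG3 m).Adj z w ∧ (HG3 m).dist z w = 1 ∨ ¬(HG3 m).Adj z w ∧ (HG3 m).dist z w = 2 :=
    fun {z} hzw => (em ((HG3 m).Adj z w)).imp (fun h => ⟨h, SimpleGraph.dist_eq_one_iff_adj.2 h⟩)
      (fun h => ⟨h, dist_eq_two_of_not_adj hm hzw h⟩)
  rcases hdist hxw with ⟨hx, dx⟩ | ⟨hx, dx⟩ <;> rcases hdist hyw with ⟨hy, dy⟩ | ⟨hy, dy⟩ <;>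
    simp [*]

end HG3

lemma isResolving_iff_not_exists_adj_twins {m : ℕ} (hm : 3 ≤ m)
    (S : Set (Fin m × Fin m × Fin m)) :
    IsResolving S ↔
      ¬∃ x y, x ∉ S ∧ y ∉ S ∧ x ≠ y ∧ ∀ w ∈ S, ((HG3 m).Adj x w ↔ (HG3 m).Adj y w) := by
  simp only [IsResolving, not_exists, not_and, not_forall, exists_prop]
  refine forall₄_congr fun x y hx hy => forall_congr' fun _ => exists_congr fun w =>
    and_congr_right fun hw => ?_
  rw [ne_eq, HG3.dist_eq_dist_iff hm (ne_of_mem_of_not_mem hw hx).symm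
    (ne_of_mem_of_not_mem hw hy).symm]

section Trace

variable {n : ℕ}

def embed (w : Fin n × Fin n × Fin n) : Fin (n + 1) × Fin (n + 1) × Fin (n + 1) :=
  (w.1.castSucc, w.2.1.castSucc, w.2.2.castSucc)

def corner (n : ℕ) : Fin (n + 1) × Fin (n + 1) × Fin (n + 1) :=
  (Fin.last n, Fin.last n, Fin.last n)

def agreeSet (W : Set (Fin n × Fin n × Fin n)) (i : Fin 3)
    (x : Fin (n + 1) × Fin (n + 1) × Fin (n + 1)) : Set (Fin n × Fin n × Fin n) :=
  {w ∈ W | coord i (embed w) = coord i x}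

def trace (W : Set (Fin n × Fin n × Fin n)) (x : Fin (n + 1) × Fin (n + 1) × Fin (n + 1)) :
    Set (Fin n × Fin n × Fin n) :=
  ⋃ i, agreeSet W i x

def HasTraceTwins (W : Set (Fin n × Fin n × Fin n)) : Prop :=
  ∃ x y, x ∉ embed '' W ∪ {corner n} ∧ y ∉ embed '' W ∪ {corner n} ∧ x ≠ y ∧
    trace W x = trace W y ∧ ((∀ i, coord i x ≠ Fin.last n) ↔ ∀ i, coord i y ≠ Fin.last n)

@[simp] lemma coord_embed (i : Fin 3) (w : Fin n × Fin n × Fin n) :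
    coord i (embed w) = (coord i w).castSucc := by
  fin_cases i <;> rfl

@[simp] lemma coord_corner (i : Fin 3) : coord i (corner n) = Fin.last n := by
  fin_cases i <;> rfl

lemma embed_injective : Function.Injective (embed (n := n)) := fun v w h =>
  ext_coord.2 fun i => Fin.castSucc_injective _ (by simpa using congrArg (coord i) h)

variable {W : Set (Fin n × Fin n × Fin n)} {i : Fin 3}
  {x y : Fin (n + 1) × Fin (n + 1) × Fin (n + 1)} {v w : Fin n × Fin n × Fin n}

lemma agreeSet_eq_block {a : Fin n} (h : coord i x = a.castSucc) :
    agreeSet W i x = block W i a := by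
  ext; simp [agreeSet, block, h]

lemma agreeSet_eq_empty (h : coord i x = Fin.last n) : agreeSet W i x = ∅ := by
  ext; simp [agreeSet, h, Fin.castSucc_ne_last]

@[simp] lemma agreeSet_embed : agreeSet W i (embed v) = block W i (coord i v) :=
  agreeSet_eq_block (coord_embed i v)

lemma agreeSet_congr (h : coord i x = coord i y) : agreeSet W i x = agreeSet W i y := by
  simp [agreeSet, h]

lemma coord_ne_last_of_mem_agreeSet (hw : w ∈ agreeSet W i x) : coord i x ≠ Fin.last n := by
  rw [← hw.2, coord_embed]; exact Fin.castSucc_ne_last _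

lemma coord_eq_of_mem_agreeSet (hv : v ∈ agreeSet W i x) (hw : w ∈ agreeSet W i x) :
    coord i v = coord i w := by
  simpa using hv.2.trans hw.2.symm

lemma coord_ne_of_mem_agreeSet (h : coord i x ≠ coord i y) (hv : v ∈ agreeSet W i x)
    (hw : w ∈ agreeSet W i y) : coord i v ≠ coord i w := fun hvw => by
  rw [← hv.2, ← hw.2, coord_embed, coord_embed, hvw] at h
  exact h rfl

lemma ne_of_mem_agreeSet (h : coord i x ≠ coord i y) (hv : v ∈ agreeSet W i x)
    (hw : w ∈ agreeSet W i y) : v ≠ w := fun hvw =>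
  coord_ne_of_mem_agreeSet h hv hw (congrArg (coord i) hvw)

lemma eq_embed_of_forall_mem_agreeSet (σ : Equiv.Perm (Fin 3))
    (hw : ∀ t, w ∈ agreeSet W (σ t) x) : x = embed w := by
  refine ext_coord.2 fun i => ?_
  obtain ⟨t, rfl⟩ := σ.surjective i
  exact (hw t).2.symm

lemma trace_subset (x : Fin (n + 1) × Fin (n + 1) × Fin (n + 1)) : trace W x ⊆ W :=
  Set.iUnion_subset fun _ _ hw => hw.1

lemma trace_eq_union (σ : Equiv.Perm (Fin 3)) (x : Fin (n + 1) × Fin (n + 1) × Fin (n + 1)) :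
    trace W x = agreeSet W (σ 0) x ∪ agreeSet W (σ 1) x ∪ agreeSet W (σ 2) x := by
  ext w
  simp only [trace, Set.mem_iUnion, Set.mem_union]
  refine ⟨fun ⟨i, hi⟩ => ?_, by rintro ((h | h) | h) <;> exact ⟨_, h⟩⟩
  obtain ⟨t, rfl⟩ := σ.surjective i
  fin_cases t <;> simp_all

lemma adj_embed_iff (hw : w ∈ W) : (HG3 (n + 1)).Adj x (embed w) ↔ w ∉ trace W x := by
  simp [HG3.adj_iff, trace, agreeSet, hw, eq_comm]

lemma adj_corner_iff : (HG3 (n + 1)).Adj x (corner n) ↔ ∀ i, coord i x ≠ Fin.last n := by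
  simp [HG3.adj_iff]

lemma adj_twins_iff :
    (∀ w ∈ embed '' W ∪ {corner n}, ((HG3 (n + 1)).Adj x w ↔ (HG3 (n + 1)).Adj y w)) ↔
      trace W x = trace W y ∧
        ((∀ i, coord i x ≠ Fin.last n) ↔ ∀ i, coord i y ≠ Fin.last n) := by
  simp only [Set.mem_union, Set.mem_singleton_iff, or_imp, forall_and, forall_eq,
    Set.forall_mem_image, adj_corner_iff]
  refine and_congr_left' ⟨fun h => Set.ext fun w => ?_, fun h w hw => ?_⟩
  · by_cases hw : w ∈ W
    · simpa [adj_embed_iff hw, not_iff_not] using h hw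
    · exact iff_of_false (fun h => hw (trace_subset x h)) (fun h => hw (trace_subset y h))
  · simp [adj_embed_iff hw, h]

lemma isResolving_iff_not_hasTraceTwins (hn : 2 ≤ n) :
    IsResolving (embed '' W ∪ {corner n}) ↔ ¬HasTraceTwins W := by
  rw [isResolving_iff_not_exists_adj_twins (by omega)]
  simp only [adj_twins_iff]
  rfl

lemma agreeSet_subset_of_trace_eq (hT : trace W x = trace W y) {j k : Fin 3} (hij : i ≠ j)
    (hik : i ≠ k) (hjk : j ≠ k) (hi : coord i x ≠ coord i y) :
    agreeSet W i x ⊆ agreeSet W j y ∪ agreeSet W k y := by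
  intro w hw
  obtain ⟨l, hl⟩ := Set.mem_iUnion.1 (hT ▸ Set.mem_iUnion.2 ⟨i, hw⟩ : w ∈ trace W y)
  rcases Fin.eq_or_eq_or_eq_of_ne hij hik hjk l with rfl | rfl | rfl
  · exact absurd (hw.2.symm.trans hl.2) hi
  · exact Or.inl hl
  · exact Or.inr hl

end Trace

lemma hasF3_of_triangle {n : ℕ} {W : Set (Fin n × Fin n × Fin n)} {i j k : Fin 3} (hij : i ≠ j)
    (hik : i ≠ k) (hjk : j ≠ k) {p q s : Fin n × Fin n × Fin n} (hp : p ∈ W) (hq : q ∈ W)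
    (hs : s ∈ W) (hpq : p ≠ q) (hqs : q ≠ s) (hps : p ≠ s) (hi : coord i p = coord i q)
    (hj : coord j q = coord j s) (hk : coord k s = coord k p) : HasF3 W := by
  have hF3 : ∀ {a b c}, a ∈ W → b ∈ W → c ∈ W → a ≠ b → a ≠ c → b ≠ c →
      a.1 = b.1 → b.2.1 = c.2.1 → c.2.2 = a.2.2 → HasF3 W :=
    fun ha hb hc hab hac hbc h₁ h₂ h₃ => ⟨_, _, _, by simp [hab, hac, hbc], ha, hb, hc, h₁, h₂, h₃⟩
  fin_cases i <;> fin_cases j <;> fin_cases k <;> simp at hij hik hjk hi hj hk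
  · exact hF3 hp hq hs hpq hps hqs hi hj hk
  · exact hF3 hq hp hs hpq.symm hqs hps hi.symm hk.symm hj.symm
  · exact hF3 hs hq hp hqs.symm hps.symm hpq.symm hj.symm hi.symm hk.symm
  · exact hF3 hs hp hq hps.symm hqs.symm hpq hk hi hj
  · exact hF3 hq hs hp hqs hpq.symm hps.symm hj hk hi
  · exact hF3 hp hs hq hps hpq hqs.symm hk.symm hj.symm hi.symm

namespace TwoBasic

variable {n : ℕ} {W : Set (Fin n × Fin n × Fin n)} {i j k : Fin 3}
  {x y : Fin (n + 1) × Fin (n + 1) × Fin (n + 1)}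

lemma ncard_block_inter_le (hW : TwoBasic W) (hij : i ≠ j) (a b : Fin n) :
    (block W i a ∩ block W j b).ncard ≤ 1 := by
  rcases hij.lt_or_gt with h | h
  · exact hW.2 i j h a b
  · rw [Set.inter_comm]; exact hW.2 j i h b a

lemma ncard_agreeSet (hW : TwoBasic W) (hx : coord i x ≠ Fin.last n) :
    (agreeSet W i x).ncard = 2 := by
  obtain ⟨a, ha⟩ := Fin.exists_castSucc_eq.2 hx
  rw [agreeSet_eq_block ha.symm]
  exact hW.1 i a

lemma ncard_agreeSet_inter_le (hW : TwoBasic W) (hij : i ≠ j)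
    (x y : Fin (n + 1) × Fin (n + 1) × Fin (n + 1)) :
    (agreeSet W i x ∩ agreeSet W j y).ncard ≤ 1 := by
  rcases Fin.eq_castSucc_or_eq_last (coord i x) with ⟨a, ha⟩ | ha
  · rcases Fin.eq_castSucc_or_eq_last (coord j y) with ⟨b, hb⟩ | hb
    · rw [agreeSet_eq_block ha, agreeSet_eq_block hb]
      exact hW.ncard_block_inter_le hij a b
    · simp [agreeSet_eq_empty hb]
  · simp [agreeSet_eq_empty ha]

lemma eq_of_mem_agreeSet_inter (hW : TwoBasic W) (hij : i ≠ j) {v w : Fin n × Fin n × Fin n}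
    (hvi : v ∈ agreeSet W i x) (hvj : v ∈ agreeSet W j y)
    (hwi : w ∈ agreeSet W i x) (hwj : w ∈ agreeSet W j y) : v = w :=
  (Set.ncard_le_one (Set.toFinite _)).1 (hW.ncard_agreeSet_inter_le hij x y) v ⟨hvi, hvj⟩ w
    ⟨hwi, hwj⟩

lemma exists_mem_agreeSet_of_trace_eq (hW : TwoBasic W) (hT : trace W x = trace W y)
    (hij : i ≠ j) (hik : i ≠ k) (hjk : j ≠ k) (hi : coord i x ≠ coord i y)
    (hx : coord i x ≠ Fin.last n) :
    ∃ p ∈ agreeSet W i x, p ∈ agreeSet W j y ∧ p ∉ agreeSet W k y := by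
  obtain ⟨p, hp, hpk⟩ : ∃ p ∈ agreeSet W i x, p ∉ agreeSet W k y := by
    by_contra! h
    have := hW.ncard_agreeSet_inter_le hik x y
    rw [Set.inter_eq_left.2 h, hW.ncard_agreeSet hx] at this
    omega
  exact ⟨p, hp, (agreeSet_subset_of_trace_eq hT hij hik hjk hi hp).resolve_right hpk, hpk⟩

lemma notMem_agreeSet_of_trace_eq (hW : TwoBasic W) (hT : trace W x = trace W y)
    (hij : i ≠ j) (hik : i ≠ k) (hjk : j ≠ k) (hi : coord i x ≠ coord i y)
    {p : Fin n × Fin n × Fin n} (hp : p ∈ agreeSet W i x) (hpj : p ∈ agreeSet W j y) :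
    p ∉ agreeSet W k y := by
  intro hpk
  have htwo := hW.ncard_agreeSet (coord_ne_last_of_mem_agreeSet hp)
  obtain ⟨q, hq, hqp⟩ :=
    Set.exists_ne_of_one_lt_ncard (by omega : 1 < (agreeSet W i x).ncard) p
  rcases agreeSet_subset_of_trace_eq hT hij hik hjk hi hq with hqj | hqk
  · exact hqp (hW.eq_of_mem_agreeSet_inter hij hq hqj hp hpj)
  · exact hqp (hW.eq_of_mem_agreeSet_inter hik hq hqk hp hpk)

lemma hasF3_of_trace_eq_of_coord_eq_last (hW : TwoBasic W) (hT : trace W x = trace W y)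
    {l m : Fin 3} (hil : i ≠ l) (him : i ≠ m) (hlm : l ≠ m)
    (hxl : coord l x = Fin.last n) (hyi : coord i y = Fin.last n) {p q : Fin n × Fin n × Fin n}
    (hp : p ∈ agreeSet W i x) (hpl : p ∈ agreeSet W l y) (hpm : p ∉ agreeSet W m y)
    (hq : q ∈ agreeSet W i x) (hqm : q ∈ agreeSet W m y) (hql : q ∉ agreeSet W l y) :
    HasF3 W := by
  have hyl := coord_ne_last_of_mem_agreeSet hpl
  have hm : coord m x = coord m y := by
    by_contra hm
    by_cases hxm : coord m x = Fin.last n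
    · obtain ⟨r, -, hr, -⟩ := hW.exists_mem_agreeSet_of_trace_eq hT.symm hlm.symm him.symm
        hil.symm (Ne.symm hm) (hxm ▸ Ne.symm hm)
      simp [agreeSet_eq_empty hxl] at hr
    · obtain ⟨r, -, hr, -⟩ := hW.exists_mem_agreeSet_of_trace_eq hT him.symm hlm.symm hil hm hxm
      simp [agreeSet_eq_empty hyi] at hr
  obtain ⟨s, hs, hsm, hsi⟩ := hW.exists_mem_agreeSet_of_trace_eq hT.symm hlm hil.symm him.symm
    (by rwa [hxl]) hyl
  rw [agreeSet_congr hm] at hsm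
  exact hasF3_of_triangle him hil hlm.symm hp.1 hq.1 hsm.1
    (fun h => hql (h ▸ hpl)) (fun h => hsi (h ▸ hq)) (fun h => hpm (h ▸ hsm))
    (coord_eq_of_mem_agreeSet hp hq) (coord_eq_of_mem_agreeSet hqm hsm)
    (coord_eq_of_mem_agreeSet hs hpl)

lemma hasF3_of_trace_eq_of_exists_last (hW : TwoBasic W) (hT : trace W x = trace W y)
    (hx : ∃ l, coord l x = Fin.last n) (hy : ∃ l, coord l y = Fin.last n)
    (hi : coord i x ≠ coord i y) (hxi : coord i x ≠ Fin.last n) : HasF3 W := by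
  obtain ⟨j, k, hij, hik, hjk⟩ : ∃ j k : Fin 3, i ≠ j ∧ i ≠ k ∧ j ≠ k := by
    fin_cases i <;> decide
  obtain ⟨p, hp, hpj, hpk⟩ := hW.exists_mem_agreeSet_of_trace_eq hT hij hik hjk hi hxi
  obtain ⟨q, hq, hqk, hqj⟩ := hW.exists_mem_agreeSet_of_trace_eq hT hik hij hjk.symm hi hxi
  have hyi : coord i y = Fin.last n := by
    obtain ⟨l, hl⟩ := hy
    rcases Fin.eq_or_eq_or_eq_of_ne hij hik hjk l with rfl | rfl | rfl
    · exact hl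
    · exact absurd hl (coord_ne_last_of_mem_agreeSet hpj)
    · exact absurd hl (coord_ne_last_of_mem_agreeSet hqk)
  obtain ⟨l, hl⟩ := hx
  rcases Fin.eq_or_eq_or_eq_of_ne hij hik hjk l with rfl | rfl | rfl
  · exact absurd hl hxi
  · exact hW.hasF3_of_trace_eq_of_coord_eq_last hT hij hik hjk hl hyi hp hpj hpk hq hqk hqj
  · exact hW.hasF3_of_trace_eq_of_coord_eq_last hT hik hij hjk.symm hl hyi hq hqk hqj hp hpj hpk

lemma hasF1_of_trace_eq (hW : TwoBasic W) (hT : trace W x = trace W y)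
    (hx : ∀ i, coord i x ≠ Fin.last n) (hy : ∀ i, coord i y ≠ Fin.last n)
    (σ : Equiv.Perm (Fin 3)) (h₀ : coord (σ 0) x ≠ coord (σ 0) y)
    (h₁ : coord (σ 1) x = coord (σ 1) y) (h₂ : coord (σ 2) x = coord (σ 2) y) : HasF1 W := by
  obtain ⟨h01, h02, h12⟩ := σ.fin_three_apply_ne
  obtain ⟨p, hp, hp₁, hp₂⟩ := hW.exists_mem_agreeSet_of_trace_eq hT h01 h02 h12 h₀ (hx _)
  obtain ⟨q, hq, hq₂, hq₁⟩ := hW.exists_mem_agreeSet_of_trace_eq hT h02 h01 h12.symm h₀ (hx _)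
  obtain ⟨p', hp', hp'₁, hp'₂⟩ :=
    hW.exists_mem_agreeSet_of_trace_eq hT.symm h01 h02 h12 (Ne.symm h₀) (hy _)
  obtain ⟨q', hq', hq'₂, hq'₁⟩ :=
    hW.exists_mem_agreeSet_of_trace_eq hT.symm h02 h01 h12.symm (Ne.symm h₀) (hy _)
  rw [← agreeSet_congr h₁] at hp₁ hq₁
  rw [← agreeSet_congr h₂] at hq₂
  obtain ⟨a, ha⟩ := Fin.exists_castSucc_eq.2 (hx (σ 0))
  obtain ⟨b, hb⟩ := Fin.exists_castSucc_eq.2 (hy (σ 0))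
  obtain ⟨c, hc⟩ := Fin.exists_castSucc_eq.2 (hx (σ 1))
  obtain ⟨d, hd⟩ := Fin.exists_castSucc_eq.2 (hx (σ 2))
  have hqp : q ≠ p := fun h => hq₁ (h ▸ hp₁)
  have hp'q' : p' ≠ q' := fun h => hq'₁ (h ▸ hp'₁)
  have hpp' := ne_of_mem_agreeSet h₀ hp hp'
  have hqq' := ne_of_mem_agreeSet h₀ hq hq'
  refine ⟨σ, a, b, c, d, q, p, p', q', fun hab => h₀ (by rw [← ha, ← hb, hab]), ?_, ?_, ?_, ?_, ?_⟩
  · simp [hqp, hp'q', hpp', hqq', ne_of_mem_agreeSet h₀ hq hp', ne_of_mem_agreeSet h₀ hp hq']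
  · rw [← agreeSet_eq_block ha.symm]
    exact Set.eq_pair_of_ncard_eq_two (hW.ncard_agreeSet (hx _)) hqp hq hp
  · rw [← agreeSet_eq_block hb.symm]
    exact Set.eq_pair_of_ncard_eq_two (hW.ncard_agreeSet (hy _)) hp'q' hp' hq'
  · rw [← agreeSet_eq_block hc.symm]
    exact Set.eq_pair_of_ncard_eq_two (hW.ncard_agreeSet (hx _)) hpp' hp₁ hp'₁
  · rw [← agreeSet_eq_block hd.symm]
    exact Set.eq_pair_of_ncard_eq_two (hW.ncard_agreeSet (hx _)) hqq' hq₂ hq'₂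

lemma coord_ne_of_trace_eq (hW : TwoBasic W) (hT : trace W x = trace W y)
    (hx : ∀ i, coord i x ≠ Fin.last n) (hy : ∀ i, coord i y ≠ Fin.last n)
    (hxW : x ∉ embed '' W) (σ : Equiv.Perm (Fin 3)) (h₀ : coord (σ 0) x ≠ coord (σ 0) y)
    (h₁ : coord (σ 1) x ≠ coord (σ 1) y) : coord (σ 2) x ≠ coord (σ 2) y := by
  intro h₂
  obtain ⟨h01, h02, h12⟩ := σ.fin_three_apply_ne
  obtain ⟨q₀, hq₀, hq₀₂, -⟩ :=
    hW.exists_mem_agreeSet_of_trace_eq hT h02 h01 h12.symm h₀ (hx _)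
  obtain ⟨q₁, hq₁, hq₁₂, -⟩ :=
    hW.exists_mem_agreeSet_of_trace_eq hT h12 h01.symm h02.symm h₁ (hx _)
  obtain ⟨r, hr, hr₂, hr₁⟩ :=
    hW.exists_mem_agreeSet_of_trace_eq hT.symm h02 h01 h12.symm (Ne.symm h₀) (hy _)
  rw [agreeSet_congr h₂] at hr₂
  -- a landmark in all three blocks of `x` would be `x` itself
  have hq₀q₁ : q₀ ≠ q₁ := by
    rintro rfl
    refine hxW ⟨q₀, hq₀.1, (eq_embed_of_forall_mem_agreeSet (W := W) σ fun t => ?_).symm⟩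
    fin_cases t
    exacts [hq₀, hq₁, agreeSet_congr h₂ ▸ hq₀₂]
  have := (Set.two_lt_ncard_iff (Set.toFinite _)).2 ⟨q₀, q₁, r, hq₀₂, hq₁₂, hr₂, hq₀q₁,
    ne_of_mem_agreeSet h₀ hq₀ hr, fun h => hr₁ (h ▸ hq₁)⟩
  rw [hW.ncard_agreeSet (hy _)] at this
  omega

lemma hasF2_of_trace_eq (hW : TwoBasic W) (hT : trace W x = trace W y)
    (hx : ∀ i, coord i x ≠ Fin.last n)
    (h₀ : coord 0 x ≠ coord 0 y) (h₁ : coord 1 x ≠ coord 1 y) (h₂ : coord 2 x ≠ coord 2 y) :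
    HasF2 W := by
  have h01 : (0 : Fin 3) ≠ 1 := by decide
  have h02 : (0 : Fin 3) ≠ 2 := by decide
  have h12 : (1 : Fin 3) ≠ 2 := by decide
  obtain ⟨w₁, hw₁, hw₁', hw₁''⟩ :=
    hW.exists_mem_agreeSet_of_trace_eq hT h02 h01 h12.symm h₀ (hx 0)
  obtain ⟨w₂, hw₂, hw₂', hw₂''⟩ := hW.exists_mem_agreeSet_of_trace_eq hT h01 h02 h12 h₀ (hx 0)
  obtain ⟨w₃, hw₃, hw₃', hw₃''⟩ :=
    hW.exists_mem_agreeSet_of_trace_eq hT h12.symm h02.symm h01.symm h₂ (hx 2)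
  obtain ⟨w₄, hw₄, hw₄', hw₄''⟩ :=
    hW.exists_mem_agreeSet_of_trace_eq hT h02.symm h12.symm h01 h₂ (hx 2)
  obtain ⟨w₅, hw₅, hw₅', hw₅''⟩ :=
    hW.exists_mem_agreeSet_of_trace_eq hT h01.symm h12 h02 h₁ (hx 1)
  obtain ⟨w₆, hw₆, hw₆', hw₆''⟩ :=
    hW.exists_mem_agreeSet_of_trace_eq hT h12 h01.symm h02.symm h₁ (hx 1)
  have h₁₂ : w₁ ≠ w₂ := fun h => hw₂'' (h ▸ hw₁')
  have h₃₄ : w₃ ≠ w₄ := fun h => hw₄'' (h ▸ hw₃')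
  have h₅₆ : w₅ ≠ w₆ := fun h => hw₆'' (h ▸ hw₅')
  have h₂₃ : w₂ ≠ w₃ := fun h => hW.notMem_agreeSet_of_trace_eq hT.symm h01.symm h12 h02
    (Ne.symm h₁) hw₂' hw₂ (h ▸ hw₃)
  have h₄₅ : w₄ ≠ w₅ := fun h => hW.notMem_agreeSet_of_trace_eq hT.symm h02 h01 h12.symm
    (Ne.symm h₀) hw₄' hw₄ (h ▸ hw₅)
  have h₁₆ : w₁ ≠ w₆ := fun h => hW.notMem_agreeSet_of_trace_eq hT.symm h12.symm h02.symm
    h01.symm (Ne.symm h₂) hw₆' hw₆ (h ▸ hw₁)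
  refine ⟨w₁, w₂, w₃, w₄, w₅, w₆, ?_, hw₁.1, hw₂.1, hw₃.1, hw₄.1, hw₅.1, hw₆.1,
    coord_eq_of_mem_agreeSet hw₁ hw₂, coord_eq_of_mem_agreeSet hw₄' hw₅',
    coord_eq_of_mem_agreeSet hw₂' hw₃', coord_eq_of_mem_agreeSet hw₅ hw₆,
    coord_eq_of_mem_agreeSet hw₃ hw₄, coord_eq_of_mem_agreeSet hw₆' hw₁',
    coord_ne_of_mem_agreeSet h₀ hw₁ hw₄', coord_ne_of_mem_agreeSet (Ne.symm h₁) hw₂' hw₅,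
    coord_ne_of_mem_agreeSet h₂ hw₃ hw₆'⟩
  simp [h₁₂, h₁₆, h₂₃, h₃₄, h₄₅, h₅₆, ne_of_mem_agreeSet (Ne.symm h₂) hw₁' hw₃,
    ne_of_mem_agreeSet h₀ hw₁ hw₄', ne_of_mem_agreeSet h₀ hw₁ hw₅',
    ne_of_mem_agreeSet h₀ hw₂ hw₄', ne_of_mem_agreeSet h₀ hw₂ hw₅',
    ne_of_mem_agreeSet (Ne.symm h₁) hw₂' hw₆, ne_of_mem_agreeSet (Ne.symm h₁) hw₃' hw₅,
    ne_of_mem_agreeSet h₂ hw₃ hw₆', ne_of_mem_agreeSet h₂ hw₄ hw₆']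

lemma hasF1_or_hasF2_or_hasF3_of_hasTraceTwins (hW : TwoBasic W) (h : HasTraceTwins W) :
    HasF1 W ∨ HasF2 W ∨ HasF3 W := by
  obtain ⟨x, y, hx, -, hxy, hT, hfull⟩ := h
  by_cases hxf : ∀ i, coord i x ≠ Fin.last n
  · have hyf := hfull.1 hxf
    have hxW : x ∉ embed '' W := fun h => hx (Or.inl h)
    by_cases h₀ : coord 0 x = coord 0 y <;> by_cases h₁ : coord 1 x = coord 1 y <;>
      by_cases h₂ : coord 2 x = coord 2 y
    · exact absurd (ext_coord.2 fun i => by fin_cases i <;> assumption) hxy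
    · exact Or.inl (hW.hasF1_of_trace_eq hT hxf hyf (.swap 0 2) (by simpa) (by simpa) (by simpa))
    · exact Or.inl (hW.hasF1_of_trace_eq hT hxf hyf (.swap 0 1) (by simpa) (by simpa) (by simpa))
    · exact absurd h₀
        (by simpa using hW.coord_ne_of_trace_eq hT hxf hyf hxW (.swap 0 2) (by simpa) (by simpa))
    · exact Or.inl (hW.hasF1_of_trace_eq hT hxf hyf 1 h₀ h₁ h₂)
    · exact absurd h₁
        (by simpa using hW.coord_ne_of_trace_eq hT hxf hyf hxW (.swap 1 2) (by simpa) (by simpa))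
    · exact absurd h₂ (hW.coord_ne_of_trace_eq hT hxf hyf hxW 1 h₀ h₁)
    · exact Or.inr (Or.inl (hW.hasF2_of_trace_eq hT hxf h₀ h₁ h₂))
  · have hyf : ¬∀ i, coord i y ≠ Fin.last n := hfull.not.1 hxf
    push Not at hxf hyf
    obtain ⟨i, hi⟩ : ∃ i, coord i x ≠ coord i y := by
      by_contra! h
      exact hxy (ext_coord.2 h)
    refine Or.inr (Or.inr ?_)
    by_cases hxi : coord i x = Fin.last n
    · exact hW.hasF3_of_trace_eq_of_exists_last hT.symm hyf hxf (Ne.symm hi) (hxi ▸ Ne.symm hi)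
    · exact hW.hasF3_of_trace_eq_of_exists_last hT hxf hyf hi hxi

end TwoBasic

section Converse

variable {n : ℕ} {W : Set (Fin n × Fin n × Fin n)}

lemma hasTraceTwins_of_embed {x y : Fin n × Fin n × Fin n} (hx : x ∉ W) (hy : y ∉ W)
    (hxy : x ≠ y) (hT : trace W (embed x) = trace W (embed y)) : HasTraceTwins W := by
  have hS : ∀ {v}, v ∉ W → embed v ∉ embed '' W ∪ {corner n} := fun hv => by
    rintro (⟨w, hw, h⟩ | h)
    · exact hv (embed_injective h ▸ hw)
    · simpa using congrArg (coord 0) h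
  exact ⟨_, _, hS hx, hS hy, embed_injective.ne hxy, hT, by simp [Fin.castSucc_ne_last]⟩

lemma hasTraceTwins_of_last {x y : Fin (n + 1) × Fin (n + 1) × Fin (n + 1)} {i j k l : Fin 3}
    (hxi : coord i x = Fin.last n) (hxj : coord j x ≠ Fin.last n)
    (hyk : coord k y = Fin.last n) (hyl : coord l y ≠ Fin.last n)
    (hxy : x ≠ y) (hT : trace W x = trace W y) : HasTraceTwins W := by
  have hS : ∀ {z} {i j : Fin 3}, coord i z = Fin.last n → coord j z ≠ Fin.last n →
      z ∉ embed '' W ∪ {corner n} := fun hi hj => by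
    rintro (⟨w, -, rfl⟩ | rfl)
    · simp at hi
    · exact hj (coord_corner _)
  exact ⟨x, y, hS hxi hxj, hS hyk hyl, hxy, hT,
    iff_of_false (fun h => h i hxi) (fun h => h k hyk)⟩

lemma notMem_of_block_eq_pair {v a b c d : Fin n × Fin n × Fin n} {i j : Fin 3}
    (hi : block W i (coord i v) = {a, b}) (hj : block W j (coord j v) = {c, d})
    (hac : a ≠ c) (had : a ≠ d) (hbc : b ≠ c) (hbd : b ≠ d) : v ∉ W := fun hv => by
  have hvi : v ∈ block W i (coord i v) := ⟨hv, rfl⟩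
  have hvj : v ∈ block W j (coord j v) := ⟨hv, rfl⟩
  rw [hi] at hvi
  rw [hj] at hvj
  rcases hvi with rfl | rfl <;> rcases hvj with h | h <;> simp_all

lemma hasTraceTwins_of_hasF1 (h : HasF1 W) : HasTraceTwins W := by
  obtain ⟨σ, a, b, c, d, w₁, w₂, w₃, w₄, hab, hdist, ha, hb, hc, hd⟩ := h
  simp only [List.pairwise_cons, List.mem_cons, forall_eq_or_imp, List.not_mem_nil,
    IsEmpty.forall_iff, implies_true, List.Pairwise.nil, and_true] at hdist
  obtain ⟨⟨d₁₂, d₁₃, -⟩, ⟨-, d₂₄⟩, d₃₄⟩ := hdist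
  obtain ⟨x, hx⟩ := exists_coord_eq fun i => ![a, c, d] (σ.symm i)
  obtain ⟨y, hy⟩ := exists_coord_eq fun i => ![b, c, d] (σ.symm i)
  have hx' : ∀ t, coord (σ t) x = ![a, c, d] t := by simp [hx]
  have hy' : ∀ t, coord (σ t) y = ![b, c, d] t := by simp [hy]
  refine hasTraceTwins_of_embed (x := x) (y := y) ?_ ?_ (fun h => hab ?_) ?_
  · exact notMem_of_block_eq_pair (i := σ 1) (j := σ 2) (by simpa [hx'] using hc)
      (by simpa [hx'] using hd) d₁₂.symm d₂₄ d₁₃.symm d₃₄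
  · exact notMem_of_block_eq_pair (i := σ 1) (j := σ 2) (by simpa [hy'] using hc)
      (by simpa [hy'] using hd) d₁₂.symm d₂₄ d₁₃.symm d₃₄
  · simpa [hx', hy'] using congrArg (coord (σ 0)) h
  · rw [trace_eq_union σ, trace_eq_union σ]
    simp only [agreeSet_embed, hx', hy', Matrix.cons_val_zero, Matrix.cons_val_one,
      Matrix.cons_val, ha, hb, hc, hd]
    ext; simp only [Set.mem_union, Set.mem_insert_iff, Set.mem_singleton_iff]
    tauto

namespace TwoBasic

lemma hasTraceTwins_of_hasF2 (hW : TwoBasic W) (h : HasF2 W) : HasTraceTwins W := by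
  obtain ⟨w₁, w₂, w₃, w₄, w₅, w₆, hdist, hw₁, hw₂, hw₃, hw₄, hw₅, hw₆,
    h₁₂, h₄₅, h₂₃, h₅₆, h₃₄, h₆₁, h₁₄, -, -⟩ := h
  simp only [List.pairwise_cons, List.mem_cons, forall_eq_or_imp, List.not_mem_nil,
    IsEmpty.forall_iff, implies_true, List.Pairwise.nil, and_true] at hdist
  obtain ⟨⟨d₁₂, -, -, d₁₅, d₁₆⟩, ⟨d₂₃, d₂₄, d₂₅, d₂₆⟩, ⟨d₃₄, d₃₅, -⟩, ⟨d₄₅, -⟩, d₅₆⟩ := hdist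
  have hb₀ : block W 0 w₁.1 = {w₁, w₂} :=
    Set.eq_pair_of_ncard_eq_two (hW.1 0 _) d₁₂ ⟨hw₁, rfl⟩ ⟨hw₂, h₁₂.symm⟩
  have hb₀' : block W 0 w₄.1 = {w₄, w₅} :=
    Set.eq_pair_of_ncard_eq_two (hW.1 0 _) d₄₅ ⟨hw₄, rfl⟩ ⟨hw₅, h₄₅.symm⟩
  have hb₁ : block W 1 w₂.2.1 = {w₂, w₃} :=
    Set.eq_pair_of_ncard_eq_two (hW.1 1 _) d₂₃ ⟨hw₂, rfl⟩ ⟨hw₃, h₂₃.symm⟩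
  have hb₁' : block W 1 w₅.2.1 = {w₅, w₆} :=
    Set.eq_pair_of_ncard_eq_two (hW.1 1 _) d₅₆ ⟨hw₅, rfl⟩ ⟨hw₆, h₅₆.symm⟩
  have hb₂ : block W 2 w₃.2.2 = {w₃, w₄} :=
    Set.eq_pair_of_ncard_eq_two (hW.1 2 _) d₃₄ ⟨hw₃, rfl⟩ ⟨hw₄, h₃₄.symm⟩
  have hb₂' : block W 2 w₆.2.2 = {w₆, w₁} :=
    Set.eq_pair_of_ncard_eq_two (hW.1 2 _) d₁₆.symm ⟨hw₆, rfl⟩ ⟨hw₁, h₆₁.symm⟩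
  refine hasTraceTwins_of_embed (x := (w₄.1, w₂.2.1, w₆.2.2)) (y := (w₁.1, w₅.2.1, w₃.2.2))
    (notMem_of_block_eq_pair (i := 0) (j := 1) hb₀' hb₁ d₂₄.symm d₃₄.symm d₂₅.symm d₃₅.symm)
    (notMem_of_block_eq_pair (i := 0) (j := 1) hb₀ hb₁' d₁₅ d₁₆ d₂₅ d₂₆)
    (fun h => h₁₄ (congrArg Prod.fst h).symm) ?_
  rw [trace_eq_union 1, trace_eq_union 1]
  simp only [Equiv.Perm.coe_one, id, agreeSet_embed, coord_zero, coord_one, coord_two,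
    hb₀, hb₀', hb₁, hb₁', hb₂, hb₂']
  ext; simp only [Set.mem_union, Set.mem_insert_iff, Set.mem_singleton_iff]
  tauto

lemma hasTraceTwins_of_hasF3 (hW : TwoBasic W) (h : HasF3 W) : HasTraceTwins W := by
  obtain ⟨w₁, w₂, w₃, hdist, hw₁, hw₂, hw₃, h₁₂, h₂₃, h₃₁⟩ := h
  simp only [List.pairwise_cons, List.mem_cons, forall_eq_or_imp, List.not_mem_nil,
    IsEmpty.forall_iff, implies_true, List.Pairwise.nil, and_true] at hdist
  obtain ⟨⟨d₁₂, d₁₃⟩, d₂₃⟩ := hdist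
  have hb₀ : block W 0 w₁.1 = {w₁, w₂} :=
    Set.eq_pair_of_ncard_eq_two (hW.1 0 _) d₁₂ ⟨hw₁, rfl⟩ ⟨hw₂, h₁₂.symm⟩
  have hb₁ : block W 1 w₂.2.1 = {w₂, w₃} :=
    Set.eq_pair_of_ncard_eq_two (hW.1 1 _) d₂₃ ⟨hw₂, rfl⟩ ⟨hw₃, h₂₃.symm⟩
  have hb₂ : block W 2 w₃.2.2 = {w₃, w₁} :=
    Set.eq_pair_of_ncard_eq_two (hW.1 2 _) d₁₃.symm ⟨hw₃, rfl⟩ ⟨hw₁, h₃₁.symm⟩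
  set x : Fin (n + 1) × Fin (n + 1) × Fin (n + 1) := (w₁.1.castSucc, w₂.2.1.castSucc, Fin.last n)
  set y : Fin (n + 1) × Fin (n + 1) × Fin (n + 1) := (w₁.1.castSucc, Fin.last n, w₃.2.2.castSucc)
  refine hasTraceTwins_of_last (x := x) (y := y) (i := 2) (j := 0) (k := 1) (l := 0) rfl
    (Fin.castSucc_ne_last _) rfl (Fin.castSucc_ne_last _)
    (fun h => Fin.castSucc_ne_last _ (congrArg (coord 1) h)) ?_
  rw [trace_eq_union 1, trace_eq_union 1]
  simp only [Equiv.Perm.coe_one, id]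
  rw [agreeSet_eq_block (x := x) (i := 0) rfl, agreeSet_eq_block (x := x) (i := 1) rfl,
    agreeSet_eq_empty (x := x) (i := 2) rfl, agreeSet_eq_block (x := y) (i := 0) rfl,
    agreeSet_eq_empty (x := y) (i := 1) rfl, agreeSet_eq_block (x := y) (i := 2) rfl,
    hb₀, hb₁, hb₂]
  ext; simp only [Set.mem_union, Set.mem_insert_iff, Set.mem_singleton_iff,
    Set.mem_empty_iff_false]
  tauto

theorem hasTraceTwins_iff (hW : TwoBasic W) :
    HasTraceTwins W ↔ HasF1 W ∨ HasF2 W ∨ HasF3 W := by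
  refine ⟨hW.hasF1_or_hasF2_or_hasF3_of_hasTraceTwins, ?_⟩
  rintro (h | h | h)
  exacts [hasTraceTwins_of_hasF1 h, hW.hasTraceTwins_of_hasF2 h, hW.hasTraceTwins_of_hasF3 h]

end TwoBasic

end Converse

/-- `W'` version of `IsResolving` lives at size `n+1` automatically. -/
theorem stmt9 (n : ℕ) (hn : 3 ≤ n) (W : Set (Fin n × Fin n × Fin n))
    (hW : TwoBasic W) :
    IsResolving
      ((fun w : Fin n × Fin n × Fin n =>
          ((w.1.castSucc, w.2.1.castSucc, w.2.2.castSucc) :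
            Fin (n+1) × Fin (n+1) × Fin (n+1))) '' W
        ∪ {(Fin.last n, Fin.last n, Fin.last n)}) ↔
    ¬ HasF1 W ∧ ¬ HasF2 W ∧ ¬ HasF3 W := by
  change IsResolving (embed '' W ∪ {corner n}) ↔ _
  rw [isResolving_iff_not_hasTraceTwins (by omega), hW.hasTraceTwins_iff]
  tauto
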